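/- arXiv:1303.4212 — 2 statements merged into one kernel-verified Lean document; each statement's English description precedes it below -/
import Mathlib

section
/- Let A, B ∈ 𝒢(Z,C). If A ⊖ B ≠ ∅, then 0⁺(A ⊖ B) ⊇ 0⁺A ⊇ 0⁺B. If additionally B ≠ ∅, then 0⁺(A ⊖ B) = 0⁺A. -/
open Set Pointwise

noncomputable section

variable {Z : Type*} [AddCommGroup Z] [Module ℝ Z] [TopologicalSpace Z]

/-- The inf-residual `A ⊖ B = {z : B + {z} ⊆ A}`. -/
def resid (A B : Set Z) : Set Z := {z : Z | B + {z} ⊆ A}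

/-- The recession cone `0⁺A`, with the convention `0⁺∅ = ∅`. -/
def recCone (A : Set Z) : Set Z := {z : Z | A.Nonempty ∧ A + {z} ⊆ A}

/-- `A ⊕ B = cl (A + B)`. -/
def oplus (A B : Set Z) : Set Z := closure (A + B)

/-- Membership in `𝒢(Z,C)`: `A = cl co (A + C)`. -/
def IsG (C A : Set Z) : Prop := A = closure (convexHull ℝ (A + C))

/-- The set `C⁻ \ {0}` of nonzero elements of the negative dual cone. -/
def negDualNZ (C : Set Z) : Set (Z →L[ℝ] ℝ) :=
  {p : Z →L[ℝ] ℝ | (∀ c ∈ C, p c ≤ 0) ∧ p ≠ 0}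

/-- `inf {-z*(z) : z ∈ A}` as an extended real. -/
def scal (p : Z →L[ℝ] ℝ) (A : Set Z) : EReal :=
  sInf ((fun z => ((-(p z) : ℝ) : EReal)) '' A)

/-- Support function `σ(z*|A) = sup {z*(z) : z ∈ A}` as an extended real. -/
def suppF (p : Z →L[ℝ] ℝ) (A : Set Z) : EReal :=
  sSup ((fun z => ((p z : ℝ) : EReal)) '' A)

/-- Inf-residuation on the extended reals: `r ⊖ s = inf {t ∈ ℝ : r ≤ s + t}`. -/
def eresid (r s : EReal) : EReal :=
  sInf ((fun t : ℝ => (t : EReal)) '' {t : ℝ | r ≤ s + (t : EReal)})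

variable {X : Type*} [AddCommGroup X] [Module ℝ X]

/-- The scalarization `φ_{f,z*}(x) = inf {-z*(z) : z ∈ f(x)}`. -/
def phi (f : X → Set Z) (p : Z →L[ℝ] ℝ) (x : X) : EReal := scal p (f x)

/-- Convexity for set-valued functions:
`f(t x₁ + (1-t) x₂) ⊇ cl (t f(x₁) + (1-t) f(x₂))`. -/
def ConvexSV (f : X → Set Z) : Prop :=
  ∀ x₁ x₂ : X, ∀ t : ℝ, t ∈ Ioo (0:ℝ) 1 →
    closure (t • f x₁ + (1 - t) • f x₂) ⊆ f (t • x₁ + (1 - t) • x₂)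

/-- The set-valued directional derivative
`f′(x,u) = ⋂_{t₀>0} cl co ⋃_{0<t<t₀} (1/t)•(f(x+tu) ⊖ f(x))`. -/
def sder (f : X → Set Z) (x u : X) : Set Z :=
  ⋂ t₀ ∈ Ioi (0:ℝ), closure (convexHull ℝ
    (⋃ t ∈ Ioo (0:ℝ) t₀, (1 / t) • resid (f (x + t • u)) (f x)))

/-- The scalar Dini derivative `φ′_{f,z*}(x,u) = inf_{t>0} (1/t)(φ(x+tu) ⊖ φ(x))`. -/
def phiDer (f : X → Set Z) (p : Z →L[ℝ] ℝ) (x u : X) : EReal :=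
  ⨅ t ∈ Ioi (0:ℝ), (((1 / t : ℝ)) : EReal) * eresid (phi f p (x + t • u)) (phi f p x)

end

/-! Since `B + (A ⊖ B) ⊆ A` and `A + 0⁺A ⊆ A`, the inclusion `0⁺A ⊆ 0⁺(A ⊖ B)` is immediate. For the other inclusions, a direction `z` of `0⁺B` or of `0⁺(A ⊖ B)` produces a whole ray
`a + ℕ • z` inside `A`, and in a closed convex set a single ray already puts `z` into the recession
cone. -/

section RecessionCone

variable {Z : Type*} [AddCommGroup Z]

theorem add_singleton_subset_iff {S T : Set Z} {z : Z} :
    S + {z} ⊆ T ↔ ∀ x ∈ S, x + z ∈ T := by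
  rw [add_singleton, image_subset_iff]
  rfl

theorem mem_resid {A B : Set Z} {z : Z} : z ∈ resid A B ↔ ∀ b ∈ B, b + z ∈ A :=
  add_singleton_subset_iff

theorem mem_recCone {A : Set Z} {z : Z} :
    z ∈ recCone A ↔ A.Nonempty ∧ ∀ a ∈ A, a + z ∈ A :=
  and_congr_right' add_singleton_subset_iff

theorem add_nsmul_mem_of_mem_recCone {A : Set Z} {z a : Z} (hz : z ∈ recCone A) (ha : a ∈ A)
    (n : ℕ) : a + n • z ∈ A := by
  induction n with
  | zero => simpa using ha
  | succ n ih => simpa only [succ_nsmul, ← add_assoc] using (mem_recCone.1 hz).2 _ ih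

theorem recCone_subset_recCone_resid {A B : Set Z} (hne : (resid A B).Nonempty) :
    recCone A ⊆ recCone (resid A B) := by
  intro z hz
  refine mem_recCone.2 ⟨hne, fun w hw => mem_resid.2 fun b hb => ?_⟩
  simpa only [add_assoc] using (mem_recCone.1 hz).2 _ (mem_resid.1 hw b hb)

variable [Module ℝ Z] [TopologicalSpace Z] [ContinuousAdd Z] [ContinuousSMul ℝ Z]

theorem mem_recCone_of_add_nsmul_mem {A : Set Z} (hAc : IsClosed A) (hAv : Convex ℝ A)
    {a z : Z} (ha : a ∈ A) (hray : ∀ n : ℕ, a + n • z ∈ A) : z ∈ recCone A := by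
  refine mem_recCone.2 ⟨⟨a, ha⟩, fun a' ha' => ?_⟩
  -- `a' + z` is the limit of the points `a' + t • (a + (1/t) • z - a')` of `A` as `t = 1/(n+1) → 0`.
  set t : ℕ → ℝ := fun n => 1 / ((n : ℝ) + 1)
  have ht : Filter.Tendsto t Filter.atTop (nhds 0) := tendsto_one_div_add_atTop_nhds_zero_nat
  have hmem : ∀ n, a' + t n • (a - a') + z ∈ A := by
    intro n
    have htn : t n ∈ Icc (0 : ℝ) 1 :=
      ⟨by positivity, div_le_one_of_le₀ (by simp) (by positivity)⟩
    have hscale : t n • (((n + 1 : ℕ) : ℝ) • z) = z := by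
      rw [smul_smul, Nat.cast_succ, one_div_mul_cancel (by positivity), one_smul]
    have := hAv.add_smul_sub_mem ha' (hray (n + 1)) htn
    rwa [← Nat.cast_smul_eq_nsmul ℝ, add_sub_right_comm, smul_add, hscale, ← add_assoc] at this
  have hlim : Filter.Tendsto (fun n => a' + t n • (a - a') + z) Filter.atTop (nhds (a' + z)) := by
    simpa using ((ht.smul_const (a - a')).const_add a').add_const z
  exact hAc.mem_of_tendsto hlim (Filter.Eventually.of_forall hmem)

theorem recCone_subset_recCone_of_resid_nonempty {A B : Set Z} (hAc : IsClosed A)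
    (hAv : Convex ℝ A) (hne : (resid A B).Nonempty) : recCone B ⊆ recCone A := by
  intro z hz
  obtain ⟨w, hw⟩ := hne
  obtain ⟨b, hb⟩ := (mem_recCone.1 hz).1
  refine mem_recCone_of_add_nsmul_mem hAc hAv (mem_resid.1 hw b hb) fun n => ?_
  simpa only [add_right_comm] using mem_resid.1 hw _ (add_nsmul_mem_of_mem_recCone hz hb n)

theorem recCone_resid_subset_recCone {A B : Set Z} (hAc : IsClosed A) (hAv : Convex ℝ A)
    (hB : B.Nonempty) : recCone (resid A B) ⊆ recCone A := by
  intro z hz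
  obtain ⟨w, hw⟩ := (mem_recCone.1 hz).1
  obtain ⟨b, hb⟩ := hB
  refine mem_recCone_of_add_nsmul_mem hAc hAv (mem_resid.1 hw b hb) fun n => ?_
  simpa only [add_assoc] using mem_resid.1 (add_nsmul_mem_of_mem_recCone hz hw n) b hb

end RecessionCone

theorem IsG.isClosed {Z : Type*} [AddCommGroup Z] [Module ℝ Z] [TopologicalSpace Z]
    {C A : Set Z} (hA : IsG C A) : IsClosed A :=
  hA ▸ isClosed_closure

theorem IsG.convex {Z : Type*} [AddCommGroup Z] [Module ℝ Z] [TopologicalSpace Z]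
    [IsTopologicalAddGroup Z] [ContinuousSMul ℝ Z] {C A : Set Z} (hA : IsG C A) :
    Convex ℝ A :=
  hA ▸ (convex_convexHull ℝ _).closure

theorem stmt_3_general
  {Z : Type*} [AddCommGroup Z] [Module ℝ Z] [TopologicalSpace Z]
  [IsTopologicalAddGroup Z] [ContinuousSMul ℝ Z]
  (C : Set Z)
  (A B : Set Z) (hA : IsG C A) :
    (resid A B ≠ ∅ → recCone B ⊆ recCone A ∧ recCone A ⊆ recCone (resid A B))
    ∧ (resid A B ≠ ∅ → B ≠ ∅ → recCone (resid A B) = recCone A) := by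
  simp only [← nonempty_iff_ne_empty]
  exact ⟨fun hne => ⟨recCone_subset_recCone_of_resid_nonempty hA.isClosed hA.convex hne,
      recCone_subset_recCone_resid hne⟩,
    fun hne hB => (recCone_resid_subset_recCone hA.isClosed hA.convex hB).antisymm
      (recCone_subset_recCone_resid hne)⟩

theorem stmt_3
  {Z : Type*} [AddCommGroup Z] [Module ℝ Z] [TopologicalSpace Z]
  [IsTopologicalAddGroup Z] [ContinuousSMul ℝ Z] [LocallyConvexSpace ℝ Z] [T2Space Z]
  (C : Set Z) (hCclosed : IsClosed C) (hCconv : Convex ℝ C)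
  (hCcone : ∀ c ∈ C, ∀ r : ℝ, 0 < r → r • c ∈ C) (hC0 : (0:Z) ∈ C)
  (A B : Set Z) (hA : IsG C A) (hB : IsG C B) :
    (resid A B ≠ ∅ → recCone B ⊆ recCone A ∧ recCone A ⊆ recCone (resid A B))
    ∧ (resid A B ≠ ∅ → B ≠ ∅ → recCone (resid A B) = recCone A) :=
  stmt_3_general C A B hA
end

section
/- Let f : X → 𝒢(Z,C) be a function and x₀ ∈ dom f. The following are equivalent: (a) f(x₀) = cl co ⋃_{x∈X} f(x); (b) for all x ∈ X and all z* ∈ C⁻∖{0}: φ_{f,z*}(x₀) ≤ φ_{f,z*}(x); (c) for all x ∈ X and all z* ∈ C⁻∖{0}: φ_{f,z*}(x₀) ⊖ φ_{f,z*}(x) ≤ 0; (d) for all x ∈ X: 0 ∈ f(x₀) ⊖ f(x); (e) for all x ∈ X and all z* ∈ C⁻∖{0}: φ_{f,z*}(x₀) = −∞ or 0 ≤ φ_{f,z*}(x) ⊖ φ_{f,z*}(x₀). Each of these conditions implies: (f) for all x ∈ X: 0⁺f(x₀) ⊇ f(x) ⊖ f(x₀). -/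
open Set Pointwise

/-!
All conditions are reformulations of `f x ⊆ f x₀` for every `x`. As `f x₀` is closed and convex,
this is (a); and `0 ∈ A ⊖ B` just says `B ⊆ A`, which gives (d) and then (f). Inclusion gives
`φ(x₀) ≤ φ(x)` by monotonicity of the infimum. Conversely, a point of `f x` outside `f x₀` is
strictly separated from `f x₀` by a continuous functional `p`; since `f x₀ + C ⊆ f x₀`, `p` is
bounded above on `f x₀` only if `p ≤ 0` on `C`, so `p ∈ C⁻ ∖ {0}` and (b) fails at `p`.
Finally (c) and (e) are (b) read through `r ⊖ s ≤ 0 ↔ r ≤ s` and, for finite `s`,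
`0 ≤ r ⊖ s ↔ s ≤ r`, where `φ(x₀) < +∞` because `f x₀ ≠ ∅`.
-/

lemma EReal.le_of_forall_pos_le_add {r s : EReal} (h : ∀ ε : ℝ, 0 < ε → r ≤ s + ε) : r ≤ s := by
  refine EReal.le_of_forall_lt_iff_le.mp fun z hz => ?_
  induction s with
  | bot =>
    have hr : r = ⊥ := by simpa using h 1 one_pos
    exact hr ▸ bot_le
  | coe a =>
    have := h (z - a) (_root_.sub_pos.mpr (EReal.coe_lt_coe_iff.mp hz))
    rwa [← EReal.coe_add, add_sub_cancel] at this
  | top => exact absurd hz not_top_lt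

section Eresid

variable {r s : EReal}

lemma eresid_le_of_le_add {t : ℝ} (h : r ≤ s + t) : eresid r s ≤ t :=
  sInf_le ⟨t, h, rfl⟩

lemma le_add_of_eresid_lt {ε : ℝ} (h : eresid r s < ε) : r ≤ s + ε := by
  obtain ⟨_, ⟨t, ht, rfl⟩, htε⟩ := sInf_lt_iff.mp h
  exact ht.trans (by gcongr)

lemma eresid_le_zero_iff : eresid r s ≤ 0 ↔ r ≤ s := by
  refine ⟨fun h => EReal.le_of_forall_pos_le_add fun ε hε =>
    le_add_of_eresid_lt (h.trans_lt (mod_cast hε)), fun h => ?_⟩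
  exact EReal.le_of_forall_lt_iff_le.mp fun t ht =>
    eresid_le_of_le_add (h.trans (le_add_of_nonneg_right ht.le))

lemma eresid_nonneg_iff {a : ℝ} : 0 ≤ eresid r a ↔ (a : EReal) ≤ r := by
  refine ⟨fun h => ?_, fun h => le_sInf ?_⟩
  · by_contra! hra
    obtain ⟨z, hrz, hza⟩ := EReal.exists_between_coe_real hra
    have hle : eresid r a ≤ (z - a : ℝ) :=
      eresid_le_of_le_add (by rw [← EReal.coe_add, add_sub_cancel]; exact hrz.le)
    have : (0 : ℝ) ≤ z - a := mod_cast h.trans hle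
    linarith [EReal.coe_lt_coe_iff.mp hza]
  · rintro _ ⟨t, ht, rfl⟩
    have : (a : EReal) ≤ (a + t : ℝ) := by rw [EReal.coe_add]; exact h.trans ht
    show (0 : EReal) ≤ t
    exact mod_cast (le_add_iff_nonneg_right a).mp (mod_cast this)

lemma eq_bot_or_eresid_nonneg_iff (hs : s ≠ ⊤) : s = ⊥ ∨ 0 ≤ eresid r s ↔ s ≤ r := by
  induction s with
  | bot => simp
  | coe a => simp [eresid_nonneg_iff]
  | top => exact absurd rfl hs

end Eresid

section Residual

variable {Z : Type*} [AddCommGroup Z] {A B : Set Z}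

lemma zero_mem_resid_iff : (0 : Z) ∈ resid A B ↔ B ⊆ A := by
  simp [resid, Set.add_singleton]

lemma resid_subset_recCone (hA : A.Nonempty) (hBA : B ⊆ A) : resid B A ⊆ recCone A :=
  fun _ hz => ⟨hA, hz.trans hBA⟩

end Residual

section SetValued

variable {Z : Type*} [AddCommGroup Z] [Module ℝ Z] [TopologicalSpace Z] {C A B : Set Z}

lemma closure_convexHull_iUnion_eq_iff {ι : Type*} {s : ι → Set Z} {i₀ : ι}
    (hclosed : IsClosed (s i₀)) (hconv : Convex ℝ (s i₀)) :
    s i₀ = closure (convexHull ℝ (⋃ i, s i)) ↔ ∀ i, s i ⊆ s i₀ := by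
  have hsub : ∀ i, s i ⊆ closure (convexHull ℝ (⋃ i, s i)) := fun i =>
    ((subset_iUnion s i).trans (subset_convexHull ℝ _)).trans subset_closure
  refine ⟨fun h i => h ▸ hsub i, fun h => (hsub i₀).antisymm ?_⟩
  calc closure (convexHull ℝ (⋃ i, s i)) ⊆ closure (convexHull ℝ (s i₀)) :=
        closure_mono (convexHull_mono (iUnion_subset h))
    _ = s i₀ := by rw [hconv.convexHull_eq, hclosed.closure_eq]

lemma IsG.isClosed_s5 (h : IsG C A) : IsClosed A := by
  rw [h]; exact isClosed_closure

lemma IsG.add_subset (h : IsG C A) : A + C ⊆ A := by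
  conv_rhs => rw [h]
  exact (subset_convexHull ℝ _).trans subset_closure

section Scal

variable {p : Z →L[ℝ] ℝ}

lemma scal_le_of_mem {z : Z} (hz : z ∈ A) : scal p A ≤ ((-(p z) : ℝ) : EReal) :=
  sInf_le ⟨z, hz, rfl⟩

lemma le_scal {r : ℝ} (h : ∀ z ∈ A, r ≤ -(p z)) : (r : EReal) ≤ scal p A := by
  refine le_sInf ?_
  rintro _ ⟨z, hz, rfl⟩
  show (r : EReal) ≤ ((-(p z) : ℝ) : EReal)
  exact mod_cast h z hz

lemma scal_anti (h : A ⊆ B) : scal p B ≤ scal p A :=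
  sInf_le_sInf (image_mono h)

lemma scal_ne_top (hA : A.Nonempty) : scal p A ≠ ⊤ :=
  ne_top_of_le_ne_top (EReal.coe_ne_top _) (scal_le_of_mem hA.some_mem)

end Scal

lemma map_nonpos_of_add_subset (hC : ∀ c ∈ C, ∀ r : ℝ, 0 < r → r • c ∈ C) (hAC : A + C ⊆ A)
    (hA : A.Nonempty) {p : Z →L[ℝ] ℝ} {u : ℝ} (hpu : ∀ a ∈ A, p a < u) : ∀ c ∈ C, p c ≤ 0 := by
  intro c hc
  by_contra! hpos
  obtain ⟨w, hw⟩ := hA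
  have hr : 0 < (u - p w) / p c := div_pos (by linarith [hpu w hw]) hpos
  have := hpu _ (hAC (add_mem_add hw (hC c hc _ hr)))
  rw [map_add, map_smul, smul_eq_mul, div_mul_cancel₀ _ hpos.ne'] at this
  linarith

variable [IsTopologicalAddGroup Z] [ContinuousSMul ℝ Z]

lemma IsG.convex_s5 (h : IsG C A) : Convex ℝ A := by
  rw [h]; exact (convex_convexHull ℝ _).closure

variable [LocallyConvexSpace ℝ Z]

lemma IsG.exists_lt_scal_of_notMem (hG : IsG C A) (hA : A.Nonempty)
    (hC : ∀ c ∈ C, ∀ r : ℝ, 0 < r → r • c ∈ C) {z : Z} (hz : z ∉ A) :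
    ∃ p ∈ negDualNZ C, ((-(p z) : ℝ) : EReal) < scal p A := by
  obtain ⟨p, u, hpu, hup⟩ := geometric_hahn_banach_closed_point hG.convex_s5 hG.isClosed_s5 hz
  have hp0 : p ≠ 0 := by
    rintro rfl
    obtain ⟨w, hw⟩ := hA
    have hw' := hpu w hw
    rw [zero_apply] at hup hw'
    linarith
  refine ⟨p, ⟨map_nonpos_of_add_subset hC hG.add_subset hA hpu, hp0⟩, ?_⟩
  exact (EReal.coe_lt_coe_iff.mpr (neg_lt_neg hup)).trans_le
    (le_scal fun a ha => neg_le_neg (hpu a ha).le)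

lemma IsG.subset_iff_forall_scal_le (hG : IsG C A) (hA : A.Nonempty)
    (hC : ∀ c ∈ C, ∀ r : ℝ, 0 < r → r • c ∈ C) :
    B ⊆ A ↔ ∀ p ∈ negDualNZ C, scal p A ≤ scal p B := by
  refine ⟨fun h p _ => scal_anti h, fun h z hzB => ?_⟩
  by_contra hzA
  obtain ⟨p, hp, hlt⟩ := hG.exists_lt_scal_of_notMem hA hC hzA
  exact (hlt.trans_le ((h p hp).trans (scal_le_of_mem hzB))).false

end SetValued

theorem stmt_5_general
  {Z : Type*} [AddCommGroup Z] [Module ℝ Z] [TopologicalSpace Z]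
  [IsTopologicalAddGroup Z] [ContinuousSMul ℝ Z] [LocallyConvexSpace ℝ Z]
  {X : Type*} [AddCommGroup X] [Module ℝ X]
  (C : Set Z)
  (hCcone : ∀ c ∈ C, ∀ r : ℝ, 0 < r → r • c ∈ C)
  (f : X → Set Z) (hG : ∀ x, IsG C (f x)) (x₀ : X) (hx₀ : (f x₀).Nonempty) :
    ((f x₀ = closure (convexHull ℝ (⋃ x : X, f x))) ↔
      (∀ x : X, ∀ p ∈ negDualNZ C, phi f p x₀ ≤ phi f p x))
    ∧ ((f x₀ = closure (convexHull ℝ (⋃ x : X, f x))) ↔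
      (∀ x : X, ∀ p ∈ negDualNZ C, eresid (phi f p x₀) (phi f p x) ≤ 0))
    ∧ ((f x₀ = closure (convexHull ℝ (⋃ x : X, f x))) ↔
      (∀ x : X, (0:Z) ∈ resid (f x₀) (f x)))
    ∧ ((f x₀ = closure (convexHull ℝ (⋃ x : X, f x))) ↔
      (∀ x : X, ∀ p ∈ negDualNZ C,
        phi f p x₀ = ⊥ ∨ (0:EReal) ≤ eresid (phi f p x) (phi f p x₀)))
    ∧ ((f x₀ = closure (convexHull ℝ (⋃ x : X, f x))) →
      ∀ x : X, resid (f x) (f x₀) ⊆ recCone (f x₀)) := by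
  have hsub : f x₀ = closure (convexHull ℝ (⋃ x, f x)) ↔ ∀ x, f x ⊆ f x₀ :=
    closure_convexHull_iUnion_eq_iff (hG x₀).isClosed_s5 (hG x₀).convex_s5
  have hscal : f x₀ = closure (convexHull ℝ (⋃ x, f x)) ↔
      ∀ x, ∀ p ∈ negDualNZ C, phi f p x₀ ≤ phi f p x :=
    hsub.trans (forall_congr' fun _ => (hG x₀).subset_iff_forall_scal_le hx₀ hCcone)
  refine ⟨hscal, ?_, ?_, ?_, fun h x => resid_subset_recCone hx₀ (hsub.mp h x)⟩
  · simpa only [eresid_le_zero_iff] using hscal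
  · simpa only [zero_mem_resid_iff] using hsub
  · simpa only [phi, eq_bot_or_eresid_nonneg_iff (scal_ne_top hx₀)] using hscal

theorem stmt_5
  {Z : Type*} [AddCommGroup Z] [Module ℝ Z] [TopologicalSpace Z]
  [IsTopologicalAddGroup Z] [ContinuousSMul ℝ Z] [LocallyConvexSpace ℝ Z] [T2Space Z]
  {X : Type*} [AddCommGroup X] [Module ℝ X]
  (C : Set Z) (hCclosed : IsClosed C) (hCconv : Convex ℝ C)
  (hCcone : ∀ c ∈ C, ∀ r : ℝ, 0 < r → r • c ∈ C) (hC0 : (0:Z) ∈ C)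
  (hdual : (negDualNZ C).Nonempty)
  (f : X → Set Z) (hG : ∀ x, IsG C (f x)) (x₀ : X) (hx₀ : (f x₀).Nonempty) :
    ((f x₀ = closure (convexHull ℝ (⋃ x : X, f x))) ↔
      (∀ x : X, ∀ p ∈ negDualNZ C, phi f p x₀ ≤ phi f p x))
    ∧ ((f x₀ = closure (convexHull ℝ (⋃ x : X, f x))) ↔
      (∀ x : X, ∀ p ∈ negDualNZ C, eresid (phi f p x₀) (phi f p x) ≤ 0))
    ∧ ((f x₀ = closure (convexHull ℝ (⋃ x : X, f x))) ↔
      (∀ x : X, (0:Z) ∈ resid (f x₀) (f x)))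
    ∧ ((f x₀ = closure (convexHull ℝ (⋃ x : X, f x))) ↔
      (∀ x : X, ∀ p ∈ negDualNZ C,
        phi f p x₀ = ⊥ ∨ (0:EReal) ≤ eresid (phi f p x) (phi f p x₀)))
    ∧ ((f x₀ = closure (convexHull ℝ (⋃ x : X, f x))) →
      ∀ x : X, resid (f x) (f x₀) ⊆ recCone (f x₀)) :=
  stmt_5_general C hCcone f hG x₀ hx₀
end
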